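/- Let d ≥ 2, p ∈ (2d/(d+1), 3d/(d+1)), set α_p = p(d+1) − 2d and r = p*/p'. Let α ∈ (0, α_p] and q = 2d/(2d−α) (so that q ∈ [1, r] and 2 − α/d = 2/q). Let C_H > 0 be any constant such that the Hardy–Littlewood–Sobolev inequality ∬_{ℝ^d×ℝ^d} |x−y|^{−α} f(x) f(y) dx dy ≤ C_H ‖f‖_{L^q}^2 holds for all nonnegative f ∈ L^q(ℝ^d), and let C_S > 0 be any constant such that ‖u‖_{L^{p*}} ≤ C_S ‖∇u‖_{L^p} for all u ∈ W^{1,p}(ℝ^d). Then for every nonnegative ρ ∈ L^1(ℝ^d) with ρ^{1/p'} ∈ W^{1,p}(ℝ^d), one has ∬_{ℝ^d×ℝ^d} |x−y|^{−α} ρ(x) ρ(y) dx dy ≤ C_H ((p')^{−1} C_S)^{pα/α_p} ‖ρ‖_{L^1}^{2(1 − (p−1)α/(2α_p))} I_p(ρ)^{α/α_p}. -/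

import Mathlib

open MeasureTheory Real Set
open scoped ENNReal NNReal

noncomputable section

abbrev Ed (d : ℕ) := EuclideanSpace ℝ (Fin d)

def jap {d : ℕ} (x : Ed d) : ℝ := Real.sqrt (1 + ‖x‖ ^ 2)

def LqNorm {d : ℕ} (q : ℝ) (f : Ed d → ℝ) : ℝ := (∫ x : Ed d, |f x| ^ q) ^ (1 / q)

def pconj (p : ℝ) : ℝ := p / (p - 1)

def pstar (d : ℕ) (p : ℝ) : ℝ := d * p / (d - p)

def alphaP (d : ℕ) (p : ℝ) : ℝ := p * (d + 1) - 2 * d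

def MemW1p {d : ℕ} (p : ℝ) (u : Ed d → ℝ) : Prop :=
  Differentiable ℝ u ∧ MemLp u (ENNReal.ofReal p) volume ∧
    MemLp (fun x => ‖gradient u x‖) (ENNReal.ofReal p) volume

def fisherInfo {d : ℕ} (p : ℝ) (ρ : Ed d → ℝ) : ℝ :=
  pconj p ^ p * ∫ x : Ed d, ‖gradient (fun y => ρ y ^ ((p - 1) / p)) x‖ ^ p

def Kker (d : ℕ) (α : ℝ) (x : Ed d) : Ed d := ‖x‖ ^ (-α) • x

/-!
HLS bounds the interaction energy by `‖ρ‖_q²`, and Hölder interpolates `‖ρ‖_q` between `‖ρ‖_1`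
and `‖ρ‖_r = ‖ρ^{1/p'}‖_{p*}^{p'}`; Sobolev bounds the last norm by `C_S ‖∇ρ^{1/p'}‖_p`, which is
`C_S I_p(ρ)^{1/p} / p'`. The Sobolev hypothesis is only informative when `ρ^{1/p'} ∈ L^{p*}`
(otherwise `LqNorm` is the junk value `0`), so this is proved first, by applying it to the
compactly supported truncations `ρ^{1/p'} χ_n` and passing to the limit with Fatou's lemma.
-/

open Filter Topology

theorem norm_gradient_eq_norm_fderiv {F : Type*} [NormedAddCommGroup F] [InnerProductSpace ℝ F]
    [CompleteSpace F] (f : F → ℝ) (x : F) : ‖gradient f x‖ = ‖fderiv ℝ f x‖ :=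
  (InnerProductSpace.toDual ℝ F).symm.norm_map _

theorem aestronglyMeasurable_norm_gradient {F : Type*} [NormedAddCommGroup F]
    [InnerProductSpace ℝ F] [FiniteDimensional ℝ F] [MeasurableSpace F] [BorelSpace F]
    (f : F → ℝ) (μ : Measure F) : AEStronglyMeasurable (fun x => ‖gradient f x‖) μ := by
  simp only [norm_gradient_eq_norm_fderiv]
  exact (measurable_fderiv ℝ f).norm.aestronglyMeasurable

theorem norm_fderiv_mul_le {E : Type*} [NormedAddCommGroup E] [NormedSpace ℝ E] {f g : E → ℝ}
    {x : E} (hf : DifferentiableAt ℝ f x) (hg : DifferentiableAt ℝ g x) :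
    ‖fderiv ℝ (fun y => f y * g y) x‖ ≤ |f x| * ‖fderiv ℝ g x‖ + |g x| * ‖fderiv ℝ f x‖ := by
  rw [fderiv_fun_mul hf hg]
  refine (norm_add_le _ _).trans_eq ?_
  rw [norm_smul, norm_smul, Real.norm_eq_abs, Real.norm_eq_abs]

theorem exists_cutoff_seq (E : Type*) [NormedAddCommGroup E] [InnerProductSpace ℝ E]
    [FiniteDimensional ℝ E] :
    ∃ (χ : ℕ → E → ℝ) (C : ℝ), ∀ n, Differentiable ℝ (χ n) ∧ (∀ x, |χ n x| ≤ 1) ∧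
      (∀ x, ‖x‖ ≤ n → χ n x = 1) ∧ HasCompactSupport (χ n) ∧ ∀ x, ‖fderiv ℝ (χ n) x‖ ≤ C := by
  let φ : ContDiffBump (0 : E) := ⟨1, 2, one_pos, one_lt_two⟩
  obtain ⟨C, hC⟩ := ((φ.contDiff (n := 1)).continuous_fderiv one_ne_zero)
    |>.bounded_above_of_compact_support (φ.hasCompactSupport.fderiv (𝕜 := ℝ))
  refine ⟨fun n x => φ (((n : ℝ) + 1)⁻¹ • x), C, fun n => ⟨?_, fun x => ?_, fun x hx => ?_, ?_,
    fun x => ?_⟩⟩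
  · exact (φ.contDiff.differentiable one_ne_zero).comp (differentiable_id.const_smul _)
  · rw [abs_of_nonneg φ.nonneg]; exact φ.le_one
  · refine φ.one_of_mem_closedBall ?_
    rw [mem_closedBall_zero_iff, norm_smul, norm_inv, Real.norm_of_nonneg (by positivity),
      inv_mul_le_one₀ (by positivity)]
    exact hx.trans (le_add_of_nonneg_right zero_le_one)
  · exact φ.hasCompactSupport.comp_smul (inv_ne_zero (Nat.cast_add_one_ne_zero n))
  · rw [fderiv_comp_smul, norm_smul, norm_inv, Real.norm_of_nonneg (by positivity)]
    have hφ' := hC (((n : ℝ) + 1)⁻¹ • x)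
    rw [inv_mul_le_iff₀ (by positivity)]
    exact hφ'.trans (le_mul_of_one_le_left ((norm_nonneg _).trans hφ') (by simp))

theorem eLpNorm_le_eLpNorm_rpow_mul_eLpNorm_rpow {α E : Type*} [MeasurableSpace α]
    {μ : Measure α} [NormedAddCommGroup E] {f : α → E} (hf : AEStronglyMeasurable f μ)
    {p q r θ : ℝ} (hp : 0 < p) (hr : 0 < r) (hθ₀ : 0 < θ) (hθ₁ : θ < 1)
    (hq : q⁻¹ = (1 - θ) / p + θ / r) :
    eLpNorm f (.ofReal q) μ ≤ eLpNorm f (.ofReal p) μ ^ (1 - θ) * eLpNorm f (.ofReal r) μ ^ θ := by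
  have hθ₁' : 0 < 1 - θ := by linarith
  have hexp : ∀ {t s : ℝ}, 0 < t → 0 < s →
      eLpNorm (fun x => ‖f x‖ ^ s) (.ofReal (t / s)) μ = eLpNorm f (.ofReal t) μ ^ s :=
    fun ht hs => by
      rw [eLpNorm_norm_rpow _ hs, ← ENNReal.ofReal_mul (by positivity), div_mul_cancel₀ _ hs.ne']
  have : ENNReal.HolderTriple (.ofReal (p / (1 - θ))) (.ofReal (r / θ)) (.ofReal q) := by
    have hq0 : 0 < q := by
      rw [← inv_pos, hq]; positivity
    constructor
    rw [← ENNReal.ofReal_inv_of_pos (by positivity), ← ENNReal.ofReal_inv_of_pos (by positivity),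
      ← ENNReal.ofReal_inv_of_pos hq0, ← ENNReal.ofReal_add (by positivity) (by positivity), hq,
      inv_div, inv_div]
  calc eLpNorm f (.ofReal q) μ
      = eLpNorm ((fun x => ‖f x‖ ^ (1 - θ)) • fun x => ‖f x‖ ^ θ) (.ofReal q) μ := by
        rw [← eLpNorm_norm f]
        congr 1
        funext x
        show ‖f x‖ = ‖f x‖ ^ (1 - θ) * ‖f x‖ ^ θ
        rw [← Real.rpow_add' (norm_nonneg _) (by norm_num),
          sub_add_cancel, Real.rpow_one]
    _ ≤ eLpNorm (fun x => ‖f x‖ ^ (1 - θ)) (.ofReal (p / (1 - θ))) μ *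
          eLpNorm (fun x => ‖f x‖ ^ θ) (.ofReal (r / θ)) μ :=
        eLpNorm_smul_le_mul_eLpNorm (hf.norm.aemeasurable.pow_const θ).aestronglyMeasurable
          (hf.norm.aemeasurable.pow_const (1 - θ)).aestronglyMeasurable
    _ = eLpNorm f (.ofReal p) μ ^ (1 - θ) * eLpNorm f (.ofReal r) μ ^ θ := by
        rw [hexp hp hθ₁', hexp hr hθ₀]

section LqNorm

variable {d : ℕ}

theorem LqNorm_nonneg (q : ℝ) (f : Ed d → ℝ) : 0 ≤ LqNorm q f :=
  Real.rpow_nonneg (integral_nonneg fun _ => by positivity) _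

theorem LqNorm_eq_toReal_eLpNorm {q : ℝ} (hq : 0 < q) {f : Ed d → ℝ}
    (hf : AEStronglyMeasurable f volume) :
    LqNorm q f = (eLpNorm f (ENNReal.ofReal q) volume).toReal := by
  rw [LqNorm, eLpNorm_eq_lintegral_rpow_enorm_toReal (by simpa using hq) ENNReal.ofReal_ne_top,
    ENNReal.toReal_ofReal hq.le, ← ENNReal.toReal_rpow,
    integral_eq_lintegral_of_nonneg_ae (.of_forall fun x => by positivity)
      (hf.norm.aemeasurable.pow_const q).aestronglyMeasurable (f := fun x => |f x| ^ q)]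
  congr 3 with x
  rw [Real.enorm_eq_ofReal_abs, ENNReal.ofReal_rpow_of_nonneg (abs_nonneg _) hq.le]

theorem memLp_and_LqNorm_le_of_eq_abs_rpow {ρ u : Ed d → ℝ} {a s q θ : ℝ} (ha : 0 < a)
    (hs : 0 < s) (hθ : θ ∈ Ioo 0 1) (hq : q⁻¹ = 1 - θ + θ / (s / a))
    (hρ1 : Integrable ρ) (hρu : ∀ x, ρ x = |u x| ^ a) (hu : MemLp u (.ofReal s) volume) :
    MemLp ρ (.ofReal q) volume ∧ LqNorm q ρ ≤ (∫ x, ρ x) ^ (1 - θ) * LqNorm s u ^ (a * θ) := by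
  obtain ⟨hθ₀, hθ₁⟩ := hθ
  have hρ0 : ∀ x, 0 ≤ ρ x := fun x => hρu x ▸ by positivity
  have hinterp : eLpNorm ρ (.ofReal q) volume ≤
      ENNReal.ofReal (∫ x, ρ x) ^ (1 - θ) * eLpNorm u (.ofReal s) volume ^ (a * θ) := by
    calc eLpNorm ρ (.ofReal q) volume
        ≤ eLpNorm ρ (.ofReal 1) volume ^ (1 - θ) * eLpNorm ρ (.ofReal (s / a)) volume ^ θ :=
          eLpNorm_le_eLpNorm_rpow_mul_eLpNorm_rpow hρ1.1 one_pos (div_pos hs ha) hθ₀ hθ₁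
            (by rw [hq, div_one])
      _ = _ := by
          congr 1
          · rw [ENNReal.ofReal_one, eLpNorm_one_eq_lintegral_enorm,
              ofReal_integral_eq_lintegral_ofReal hρ1 (.of_forall hρ0)]
            simp_rw [Real.enorm_of_nonneg (hρ0 _)]
          · rw [show ρ = fun x => ‖u x‖ ^ a from funext hρu, eLpNorm_norm_rpow _ ha,
              ← ENNReal.ofReal_mul (div_pos hs ha).le, div_mul_cancel₀ _ ha.ne', ← ENNReal.rpow_mul]
  have hfin : ENNReal.ofReal (∫ x, ρ x) ^ (1 - θ) * eLpNorm u (.ofReal s) volume ^ (a * θ) ≠ ⊤ :=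
    ENNReal.mul_ne_top (ENNReal.rpow_ne_top_of_nonneg (by linarith) ENNReal.ofReal_ne_top)
      (ENNReal.rpow_ne_top_of_nonneg (by positivity) hu.eLpNorm_ne_top)
  have hq0 : 0 < q := by
    rw [← inv_pos, hq]; positivity
  refine ⟨⟨hρ1.1, hinterp.trans_lt hfin.lt_top⟩, ?_⟩
  rw [LqNorm_eq_toReal_eLpNorm hq0 hρ1.1, LqNorm_eq_toReal_eLpNorm hs hu.1, ← ENNReal.toReal_ofReal
    (integral_nonneg hρ0), ENNReal.toReal_rpow, ENNReal.toReal_rpow, ← ENNReal.toReal_mul]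
  exact ENNReal.toReal_mono hfin hinterp

theorem MemW1p.mul_cutoff {p C : ℝ} {u χ : Ed d → ℝ} (hu : MemW1p p u)
    (hχ : Differentiable ℝ χ) (hχ₁ : ∀ x, |χ x| ≤ 1) (hχC : ∀ x, ‖fderiv ℝ χ x‖ ≤ C) :
    MemW1p p (fun x => u x * χ x) ∧
      ∀ x, ‖gradient (fun y => u y * χ y) x‖ ≤ ‖gradient u x‖ + C * |u x| := by
  have hbound : ∀ x, ‖gradient (fun y => u y * χ y) x‖ ≤ ‖gradient u x‖ + C * |u x| := by
    intro x
    rw [norm_gradient_eq_norm_fderiv, norm_gradient_eq_norm_fderiv]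
    refine (norm_fderiv_mul_le (hu.1 x) (hχ x)).trans ?_
    nlinarith [mul_le_mul_of_nonneg_left (hχC x) (abs_nonneg (u x)),
      mul_le_mul_of_nonneg_right (hχ₁ x) (norm_nonneg (fderiv ℝ u x))]
  refine ⟨⟨hu.1.mul hχ, ?_, ?_⟩, hbound⟩
  · refine hu.2.1.of_le (hu.1.continuous.mul hχ.continuous).aestronglyMeasurable
      (.of_forall fun x => ?_)
    simpa [abs_mul] using mul_le_of_le_one_right (abs_nonneg (u x)) (hχ₁ x)
  · refine (hu.2.2.add (hu.2.1.norm.const_mul C)).of_le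
      (aestronglyMeasurable_norm_gradient _ _) (.of_forall fun x => ?_)
    simpa using (hbound x).trans (le_abs_self _)

theorem MemW1p.memLp_of_sobolev {p s CS : ℝ} (hp : 0 < p) (hs : 0 < s) (hCS : 0 ≤ CS)
    (hSob : ∀ v : Ed d → ℝ, MemW1p p v → LqNorm s v ≤ CS * LqNorm p fun x => ‖gradient v x‖)
    {u : Ed d → ℝ} (hu : MemW1p p u) : MemLp u (ENNReal.ofReal s) volume := by
  obtain ⟨χ, C, hχ⟩ := exists_cutoff_seq (Ed d)
  set m : Ed d → ℝ := fun x => ‖gradient u x‖ + C * |u x|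
  have hm : MemLp m (ENNReal.ofReal p) volume := hu.2.2.add (hu.2.1.norm.const_mul C)
  set M : ℝ := CS * (eLpNorm m (ENNReal.ofReal p) volume).toReal
  have hcut : ∀ n, eLpNorm (fun x => u x * χ n x) (ENNReal.ofReal s) volume ≤ ENNReal.ofReal M := by
    intro n
    obtain ⟨hχd, hχ₁, -, hχc, hχC⟩ := hχ n
    obtain ⟨hv, hvm⟩ := hu.mul_cutoff hχd hχ₁ hχC
    have hvs : MemLp (fun x => u x * χ n x) (ENNReal.ofReal s) volume :=
      hv.1.continuous.memLp_of_hasCompactSupport hχc.mul_left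
    rw [← ENNReal.ofReal_toReal hvs.eLpNorm_ne_top, ← LqNorm_eq_toReal_eLpNorm hs hvs.1]
    refine ENNReal.ofReal_le_ofReal ((hSob _ hv).trans (mul_le_mul_of_nonneg_left ?_ hCS))
    rw [LqNorm_eq_toReal_eLpNorm hp hv.2.2.1]
    exact ENNReal.toReal_mono hm.eLpNorm_ne_top
      (eLpNorm_mono_real fun x => (norm_norm _).trans_le (hvm x))
  have hlim : ∀ x, Tendsto (fun n => u x * χ n x) atTop (𝓝 (u x)) := by
    intro x
    refine tendsto_const_nhds.congr' ?_
    filter_upwards [eventually_ge_atTop ⌈‖x‖⌉₊] with n hn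
    rw [(hχ n).2.2.1 x ((Nat.le_ceil _).trans (by exact_mod_cast hn)), mul_one]
  refine ⟨hu.1.continuous.aestronglyMeasurable, ?_⟩
  calc eLpNorm u (ENNReal.ofReal s) volume
      ≤ atTop.liminf fun n => eLpNorm (fun x => u x * χ n x) (ENNReal.ofReal s) volume :=
        Lp.eLpNorm_lim_le_liminf_eLpNorm
          (fun n => (hu.1.continuous.mul (hχ n).1.continuous).aestronglyMeasurable) u
          (.of_forall hlim)
    _ ≤ ENNReal.ofReal M := liminf_le_of_frequently_le' (.of_forall hcut)
    _ < ⊤ := ENNReal.ofReal_lt_top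

theorem fisherInfo_eq_rpow {p : ℝ} (hp : 1 < p) (ρ : Ed d → ℝ) :
    fisherInfo p ρ =
      (pconj p * LqNorm p fun x => ‖gradient (fun y => ρ y ^ ((p - 1) / p)) x‖) ^ p := by
  have hp' : 0 ≤ pconj p := div_nonneg (by linarith) (by linarith)
  simp only [fisherInfo, LqNorm, abs_norm]
  rw [Real.mul_rpow hp' (by positivity), ← Real.rpow_mul (integral_nonneg fun x => by positivity),
    one_div_mul_cancel (by linarith), Real.rpow_one]

end LqNorm

section Exponents

variable {d : ℕ} {p : ℝ}

theorem one_lt_of_two_mul_div_lt (hd : 1 ≤ d) (hp : 2 * (d : ℝ) / ((d : ℝ) + 1) < p) : 1 < p := by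
  have hd' : (1 : ℝ) ≤ d := by exact_mod_cast hd
  rw [div_lt_iff₀ (by positivity)] at hp
  nlinarith

theorem lt_of_lt_three_mul_div (hd : 2 ≤ d) (hp : p < 3 * (d : ℝ) / ((d : ℝ) + 1)) :
    p < d ∧ p < 3 := by
  have hd' : (2 : ℝ) ≤ d := by exact_mod_cast hd
  rw [lt_div_iff₀ (by positivity)] at hp
  constructor <;> nlinarith

theorem alphaP_pos (hp : 2 * (d : ℝ) / ((d : ℝ) + 1) < p) : 0 < alphaP d p := by
  rw [div_lt_iff₀ (by positivity)] at hp
  rw [alphaP]; linarith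

theorem alphaP_lt (hp : p < 3 * (d : ℝ) / ((d : ℝ) + 1)) : alphaP d p < d := by
  rw [lt_div_iff₀ (by positivity)] at hp
  rw [alphaP]; linarith

theorem sub_one_mul_div_two_mul_mem_Ioo {α A : ℝ} (hp : 1 < p) (hp3 : p < 3) (hα : 0 < α)
    (hαA : α ≤ A) : (p - 1) * α / (2 * A) ∈ Ioo 0 1 := by
  refine ⟨by apply div_pos <;> nlinarith, (div_lt_one (by linarith)).2 ?_⟩
  nlinarith [mul_le_mul_of_nonneg_left hαA (by linarith : (0 : ℝ) ≤ p - 1)]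

theorem hls_exponent_interpolation {α : ℝ} (hp : 1 < p) (hpd : p < d) (hα : α ≠ 2 * d)
    (hαP : alphaP d p ≠ 0) :
    (2 * d / (2 * d - α))⁻¹ =
      1 - (p - 1) * α / (2 * alphaP d p) +
        (p - 1) * α / (2 * alphaP d p) / (pstar d p / pconj p) := by
  have hd : (d : ℝ) ≠ 0 := by linarith
  have hα' : 2 * (d : ℝ) - α ≠ 0 := sub_ne_zero.2 hα.symm
  have hpd' : (d : ℝ) - p ≠ 0 := by linarith
  have hp1 : p - 1 ≠ 0 := by linarith
  have hp0 : p ≠ 0 := by linarith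
  rw [alphaP] at hαP ⊢
  rw [pstar, pconj]
  field_simp
  ring

theorem eq_abs_rpow_sub_one_div_rpow_pconj (hp : 1 < p) {t : ℝ} (ht : 0 ≤ t) :
    t = |t ^ ((p - 1) / p)| ^ pconj p := by
  rw [abs_of_nonneg (Real.rpow_nonneg ht _), ← Real.rpow_mul ht, pconj,
    div_mul_div_cancel₀ (by linarith), div_self (by linarith), Real.rpow_one]

theorem sq_le_of_le_interpolation {α A N CS G L : ℝ} (hp : 1 < p) (hA : 0 < A) (hN : 0 ≤ N)
    (hCS : 0 ≤ CS) (hG : 0 ≤ G) (hL0 : 0 ≤ L)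
    (hL : L ≤ N ^ (1 - (p - 1) * α / (2 * A)) * (CS * G) ^ (pconj p * ((p - 1) * α / (2 * A)))) :
    L ^ 2 ≤ ((pconj p)⁻¹ * CS) ^ (p * α / A) * N ^ (2 * (1 - (p - 1) * α / (2 * A))) *
      ((pconj p * G) ^ p) ^ (α / A) := by
  have hp' : 0 < pconj p := div_pos (by linarith) (by linarith)
  have hE : pconj p * ((p - 1) * α / (2 * A)) * 2 = p * α / A := by
    have : p - 1 ≠ 0 := by linarith
    rw [pconj]; field_simp
  calc L ^ 2 ≤ (N ^ (1 - (p - 1) * α / (2 * A)) *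
          (CS * G) ^ (pconj p * ((p - 1) * α / (2 * A)))) ^ 2 := by gcongr
    _ = N ^ (2 * (1 - (p - 1) * α / (2 * A))) * (CS * G) ^ (p * α / A) := by
        rw [mul_pow, ← Real.rpow_natCast, ← Real.rpow_natCast, ← Real.rpow_mul hN,
          ← Real.rpow_mul (by positivity), Nat.cast_ofNat, hE, mul_comm _ (2 : ℝ)]
    _ = _ := by
        rw [← Real.rpow_mul (by positivity), ← mul_div_assoc p α A,
          show CS * G = (pconj p)⁻¹ * CS * (pconj p * G) by field_simp,
          Real.mul_rpow (by positivity) (by positivity)]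
        ring

end Exponents

/-- combining the Hardy–Littlewood–Sobolev inequality (constant `C_H`, exponent
`q = 2d/(2d-α)`) with the Sobolev inequality (constant `C_S`) gives, for `α ∈ (0, α_p]`,
`∬ |x-y|^{-α} ρ(x)ρ(y) ≤ C_H ((p')⁻¹C_S)^{pα/α_p} ‖ρ‖_{L^1}^{2(1-(p-1)α/(2α_p))} I_p(ρ)^{α/α_p}`. -/
theorem statement6 (d : ℕ) (p α CH CS : ℝ) (hd : 2 ≤ d)
    (hp1 : 2 * (d : ℝ) / ((d : ℝ) + 1) < p) (hp2 : p < 3 * (d : ℝ) / ((d : ℝ) + 1))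
    (hα0 : 0 < α) (hα1 : α ≤ alphaP d p)
    (hCH : 0 < CH) (hCS : 0 < CS)
    (hHLS : ∀ f : Ed d → ℝ, (∀ x, 0 ≤ f x) →
      MemLp f (ENNReal.ofReal (2 * d / (2 * d - α))) volume →
      (∫ x : Ed d, ∫ y : Ed d, ‖x - y‖ ^ (-α) * f x * f y) ≤
        CH * LqNorm (2 * d / (2 * d - α)) f ^ 2)
    (hSob : ∀ u : Ed d → ℝ, MemW1p p u →
      LqNorm (pstar d p) u ≤ CS * LqNorm p fun x => ‖gradient u x‖)
    (ρ : Ed d → ℝ) (hρ0 : ∀ x, 0 ≤ ρ x) (hρ1 : Integrable ρ)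
    (hW : MemW1p p fun x => ρ x ^ ((p - 1) / p)) :
    (∫ x : Ed d, ∫ y : Ed d, ‖x - y‖ ^ (-α) * ρ x * ρ y) ≤
      CH * ((pconj p)⁻¹ * CS) ^ (p * α / alphaP d p) *
        (∫ x : Ed d, ρ x) ^ (2 * (1 - (p - 1) * α / (2 * alphaP d p))) *
        fisherInfo p ρ ^ (α / alphaP d p) := by
  have hp : 1 < p := one_lt_of_two_mul_div_lt (by omega) hp1
  obtain ⟨hpd, hp3⟩ := lt_of_lt_three_mul_div hd hp2
  have hp' : 0 < pconj p := div_pos (by linarith) (by linarith)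
  have hs : 0 < pstar d p := div_pos (by positivity) (by linarith)
  have hus := hW.memLp_of_sobolev (by linarith) hs hCS.le hSob
  have hθ := sub_one_mul_div_two_mul_mem_Ioo hp hp3 hα0 hα1
  have hα : α < 2 * d := by linarith [alphaP_lt hp2]
  obtain ⟨hρq, hL⟩ := memLp_and_LqNorm_le_of_eq_abs_rpow hp' hs hθ
    (hls_exponent_interpolation hp hpd hα.ne (alphaP_pos hp1).ne')
    hρ1 (fun x => eq_abs_rpow_sub_one_div_rpow_pconj hp (hρ0 x)) hus
  calc (∫ x : Ed d, ∫ y : Ed d, ‖x - y‖ ^ (-α) * ρ x * ρ y)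
      ≤ CH * LqNorm (2 * d / (2 * d - α)) ρ ^ 2 := hHLS ρ hρ0 hρq
    _ ≤ _ := by
        rw [mul_assoc CH, mul_assoc CH, fisherInfo_eq_rpow hp]
        refine mul_le_mul_of_nonneg_left ?_ hCH.le
        refine sq_le_of_le_interpolation hp (alphaP_pos hp1) (integral_nonneg hρ0) hCS.le
          (LqNorm_nonneg _ _) (LqNorm_nonneg _ _) (hL.trans ?_)
        exact mul_le_mul_of_nonneg_left (Real.rpow_le_rpow (LqNorm_nonneg _ _) (hSob _ hW)
          (mul_nonneg hp'.le hθ.1.le)) (Real.rpow_nonneg (integral_nonneg hρ0) _)
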